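/- arXiv:1904.05540 — 2 statements merged into one kernel-verified Lean document; each statement's English description precedes it below -/
import Mathlib

section
/- Let β_1, …, β_m : ℕ → [0,1] be finitely many nonincreasing sequences, each with finite support and total sum at most 1, and define ν(k) = max_i ∫β_i(k) − max_i ∫β_i(k−1), where ∫β_i(k) = ∑_{j=0}^{k} β_i(j) and ∫β_i(−1) = 0. Then ν is a source element of ℕ (values in [0,1], finite support, total sum at most 1) and β_i ≺ ν for every i, i.e. ν is an upper bound of {β_1,…,β_m} with respect to the majorization preorder. -/
/-- A source element of `Y`: values in `[0,1]`, finite support, total weight at most 1. -/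
def IsSourceElem {Y : Type*} (β : Y → ℝ) : Prop :=
  (∀ y, 0 ≤ β y ∧ β y ≤ 1) ∧ (Function.support β).Finite ∧ ∑ᶠ y, β y ≤ 1

/-- The sum of the `k` largest values of `β` (equivalently, `∑_{i<k} β↓(i)`):
the supremum of the sums of `β` over sets of at most `k` elements. -/
noncomputable def sumKLargest {Y : Type*} (β : Y → ℝ) (k : ℕ) : ℝ :=
  sSup {s : ℝ | ∃ S : Finset Y, S.card ≤ k ∧ s = ∑ y ∈ S, β y}

/-- `α` is majorized by `β`: for every `k`, the sum of the `k` largest values of `α`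
is at most the sum of the `k` largest values of `β`. -/
def Maj {Y : Type*} (α β : Y → ℝ) : Prop :=
  ∀ k : ℕ, sumKLargest α k ≤ sumKLargest β k

/-- The maximum over `i` of the partial sums `∫β_i(k) = ∑_{j=0}^{k} β_i(j)`. -/
noncomputable def maxIntegral {m : ℕ} (β : Fin m → ℕ → ℝ) (k : ℕ) : ℝ :=
  ⨆ i : Fin m, ∑ j ∈ Finset.range (k + 1), β i j

/-- `ν(k) = max_i ∫β_i(k) − max_i ∫β_i(k−1)`, with `∫β_i(−1) = 0`. -/
noncomputable def maxJoin {m : ℕ} (β : Fin m → ℕ → ℝ) (k : ℕ) : ℝ :=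
  if k = 0 then maxIntegral β 0 else maxIntegral β k - maxIntegral β (k - 1)

lemma sum_le_sum_range_of_antitone (f : ℕ → ℝ) (hf : Antitone f) :
    ∀ (n : ℕ) (S : Finset ℕ), S.card = n → ∑ y ∈ S, f y ≤ ∑ j ∈ Finset.range n, f j := by
  intro n
  induction n with
  | zero => intro S hS; simp [Finset.card_eq_zero.mp hS]
  | succ n ih =>
    intro S hS
    have hne : S.Nonempty := Finset.card_pos.mp (by omega)
    set a := S.max' hne with ha
    have haS : a ∈ S := S.max'_mem hne
    have hcard : (S.erase a).card = n := by rw [Finset.card_erase_of_mem haS, hS]; omega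
    have hsub : S.erase a ⊆ Finset.range a := by
      intro x hx
      have hxa : x ≠ a := Finset.ne_of_mem_erase hx
      have := S.le_max' x (Finset.mem_of_mem_erase hx)
      exact Finset.mem_range.mpr (lt_of_le_of_ne this hxa)
    have hna : n ≤ a := by
      have := Finset.card_le_card hsub
      rwa [hcard, Finset.card_range] at this
    calc ∑ y ∈ S, f y = ∑ y ∈ S.erase a, f y + f a := by
          rw [Finset.sum_erase_add _ _ haS]
      _ ≤ ∑ j ∈ Finset.range n, f j + f n :=
          add_le_add (ih _ hcard) (hf hna)
      _ = ∑ j ∈ Finset.range (n+1), f j := (Finset.sum_range_succ f n).symm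

/-- For finitely many nonincreasing source elements `β_1, …, β_m` of `ℕ`, the sequence
`ν(k) = max_i ∫β_i(k) − max_i ∫β_i(k−1)` is a source element of `ℕ` and majorizes
every `β_i`: it is an upper bound of `{β_1,…,β_m}` for the majorization preorder. -/
theorem maxJoin_is_majorization_upper_bound {m : ℕ} (hm : 0 < m) (β : Fin m → ℕ → ℝ)
    (hmono : ∀ i, Antitone (β i))
    (hrange : ∀ i k, 0 ≤ β i k ∧ β i k ≤ 1)
    (hsupp : ∀ i, (Function.support (β i)).Finite)
    (hsum : ∀ i, ∑ᶠ k, β i k ≤ 1) :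
    IsSourceElem (maxJoin β) ∧ (∀ i, Maj (β i) (maxJoin β)) := by
  have hne : Nonempty (Fin m) := ⟨⟨0, hm⟩⟩
  have hbdd : ∀ k, BddAbove (Set.range fun i : Fin m => ∑ j ∈ Finset.range (k + 1), β i j) :=
    fun k => Set.Finite.bddAbove (Set.finite_range _)
  have hle : ∀ i k, ∑ j ∈ Finset.range (k + 1), β i j ≤ maxIntegral β k :=
    fun i k => le_ciSup (hbdd k) i
  have hFle : ∀ k (a : ℝ), (∀ i, ∑ j ∈ Finset.range (k + 1), β i j ≤ a) → maxIntegral β k ≤ a :=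
    fun k a h => ciSup_le h
  have hFmono : Monotone (maxIntegral β) := by
    apply monotone_nat_of_le_succ
    intro k
    apply hFle
    intro i
    refine le_trans ?_ (hle i (k+1))
    apply Finset.sum_le_sum_of_subset_of_nonneg
    · exact Finset.range_subset_range.mpr (by omega)
    · exact fun j _ _ => (hrange i j).1
  have htel : ∀ n, ∑ j ∈ Finset.range (n + 1), maxJoin β j = maxIntegral β n := by
    intro n
    induction n with
    | zero => simp [maxJoin]
    | succ n ih =>
      rw [Finset.sum_range_succ, ih]
      simp only [maxJoin, Nat.succ_ne_zero, if_false, Nat.add_sub_cancel]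
      ring
  have hν0 : ∀ k, 0 ≤ maxJoin β k := by
    intro k
    unfold maxJoin
    split
    · exact le_trans (Finset.sum_nonneg fun j _ => (hrange ⟨0, hm⟩ j).1) (hle ⟨0, hm⟩ 0)
    · rename_i h
      have := hFmono (Nat.sub_le k 1)
      linarith
  have hν1 : ∀ k, maxJoin β k ≤ 1 := by
    intro k
    unfold maxJoin
    split
    · apply hFle; intro i; simpa using (hrange i 0).2
    · rename_i h
      have h1 : maxIntegral β k ≤ maxIntegral β (k - 1) + 1 := by
        apply hFle
        intro i
        have hk : k - 1 + 1 = k := Nat.succ_pred_eq_of_pos (Nat.pos_of_ne_zero h)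
        have : ∑ j ∈ Finset.range (k + 1), β i j
            = ∑ j ∈ Finset.range (k - 1 + 1), β i j + β i k := by
          rw [hk, Finset.sum_range_succ]
        rw [this]
        exact add_le_add (hle i (k-1)) (hrange i k).2
      linarith
  -- a uniform bound on supports
  have hU : (⋃ i, Function.support (β i)).Finite := Set.finite_iUnion hsupp
  obtain ⟨N, hN⟩ := hU.bddAbove
  have hzero : ∀ i j, N < j → β i j = 0 := by
    intro i j hj
    by_contra hb
    exact absurd (hN (Set.mem_iUnion.mpr ⟨i, hb⟩)) (by omega)
  have hsuppν : Function.support (maxJoin β) ⊆ ↑(Finset.range (N + 1)) := by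
    intro k hk
    simp only [Finset.coe_range, Set.mem_Iio]
    by_contra hkN
    push_neg at hkN
    apply hk
    have hk0 : k ≠ 0 := by omega
    have heq : maxIntegral β k = maxIntegral β (k - 1) := by
      apply le_antisymm
      · apply hFle
        intro i
        have hk1 : k - 1 + 1 = k := by omega
        have : ∑ j ∈ Finset.range (k + 1), β i j
            = ∑ j ∈ Finset.range (k - 1 + 1), β i j + β i k := by
          rw [hk1, Finset.sum_range_succ]
        rw [this, hzero i k (by omega), add_zero]
        exact hle i (k - 1)
      · exact hFmono (Nat.sub_le k 1)
    simp [maxJoin, hk0, heq]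
  have hβsum : ∀ i, ∑ j ∈ Finset.range (N + 1), β i j ≤ 1 := by
    intro i
    have hs : Function.support (β i) ⊆ ↑(Finset.range (N + 1)) := by
      intro x hx
      simp only [Finset.coe_range, Set.mem_Iio]
      have := hN (Set.mem_iUnion.mpr ⟨i, hx⟩)
      omega
    rw [← finsum_eq_finset_sum_of_support_subset (β i) hs]
    exact hsum i
  -- key inequality: partial sums of β i are below partial sums of ν
  have hpartial : ∀ i k, ∑ j ∈ Finset.range k, β i j ≤ ∑ j ∈ Finset.range k, maxJoin β j := by
    intro i k
    cases k with
    | zero => simp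
    | succ n => rw [htel n]; exact hle i n
  constructor
  · refine ⟨fun k => ⟨hν0 k, hν1 k⟩, Set.Finite.subset (Finset.range (N+1)).finite_toSet hsuppν, ?_⟩
    rw [finsum_eq_finset_sum_of_support_subset (maxJoin β) hsuppν, htel N]
    exact hFle N 1 hβsum
  · intro i k
    unfold sumKLargest
    have hsetν : BddAbove {s : ℝ | ∃ S : Finset ℕ, S.card ≤ k ∧ s = ∑ y ∈ S, maxJoin β y} := by
      refine ⟨(k : ℝ), ?_⟩
      rintro s ⟨S, hc, rfl⟩
      calc ∑ y ∈ S, maxJoin β y ≤ ∑ y ∈ S, (1 : ℝ) :=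
            Finset.sum_le_sum fun y _ => hν1 y
        _ = (S.card : ℝ) := by simp
        _ ≤ (k : ℝ) := by exact_mod_cast hc
    have hne0 : {s : ℝ | ∃ S : Finset ℕ, S.card ≤ k ∧ s = ∑ y ∈ S, β i y}.Nonempty :=
      ⟨0, ∅, by simp, by simp⟩
    apply csSup_le hne0
    rintro s ⟨S, hc, rfl⟩
    have h1 : ∑ y ∈ S, β i y ≤ ∑ j ∈ Finset.range k, β i j := by
      refine le_trans (sum_le_sum_range_of_antitone (β i) (hmono i) S.card S rfl) ?_
      apply Finset.sum_le_sum_of_subset_of_nonneg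
      · exact Finset.range_subset_range.mpr hc
      · exact fun j _ _ => (hrange i j).1
    refine le_trans (le_trans h1 (hpartial i k)) ?_
    exact le_csSup hsetν ⟨Finset.range k, by simp, rfl⟩
end

section
/- Let B be a finite set of source elements of a set Y, β ∈ B, and β̂(y) = min{β(u) | u ∈ B_y}. Then β̂ is the greatest source element below β that is consistent with B: if α is any source element of Y with α(y) ≤ β(y) for all y ∈ Y that is consistent with every element of B, then α(y) ≤ β̂(y) for all y ∈ Y. -/
/-- `α` is consistent with `δ`: strict preferences of either never contradict
the (weak) preferences of the other. -/
def ConsistentWith {Y : Type*} (α δ : Y → ℝ) : Prop :=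
  ∀ u v : Y, (α u < α v → δ u ≤ δ v) ∧ (δ u < δ v → α u ≤ α v)

/-- The strict preference step of `B`: `u ⊲_δ v` (i.e. `δ u < δ v`) for some `δ ∈ B`. -/
def LtRel {Y : Type*} (B : Set (Y → ℝ)) (u v : Y) : Prop :=
  ∃ δ ∈ B, δ u < δ v

/-- The consistency class of `B` at `y`: `{y}` together with all `u` lying in a common
`⊲`-cycle with `y` in `B`. -/
def consClass {Y : Type*} (B : Set (Y → ℝ)) (y : Y) : Set Y :=
  {y} ∪ {u | Relation.TransGen (LtRel B) u y ∧ Relation.TransGen (LtRel B) y u}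

/-- `β̂(y) = min {β(u) | u ∈ B_y}` (as an infimum; the minimum is attained since
`β` takes only finitely many values). -/
noncomputable def hatOf {Y : Type*} (B : Set (Y → ℝ)) (β : Y → ℝ) : Y → ℝ :=
  fun y => sInf (β '' consClass B y)

/-!
Consistency with `δ` makes `α` weakly monotone along every step `u ⊲_δ v`, hence along every
`⊲`-path. Each `u ∈ B_y` is reached from `y` by such a path, so `α y ≤ α u ≤ β u`.
-/

theorem ConsistentWith.le_of_lt {Y : Type*} {α δ : Y → ℝ} (h : ConsistentWith α δ) {u v : Y}
    (huv : δ u < δ v) : α u ≤ α v :=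
  (h u v).2 huv

section

variable {Y : Type*} {B : Set (Y → ℝ)} {α : Y → ℝ}

theorem le_of_transGen_ltRel (hcons : ∀ δ ∈ B, ConsistentWith α δ) {u v : Y}
    (huv : Relation.TransGen (LtRel B) u v) : α u ≤ α v := by
  have hlift : Relation.TransGen (· ≤ ·) (α u) (α v) :=
    Relation.TransGen.lift α (fun _ _ ⟨δ, hδ, hlt⟩ => (hcons δ hδ).le_of_lt hlt) u v huv
  rwa [Relation.transGen_eq_self] at hlift

theorem le_of_mem_consClass (hcons : ∀ δ ∈ B, ConsistentWith α δ) {y u : Y}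
    (hu : u ∈ consClass B y) : α y ≤ α u := by
  rcases hu with rfl | ⟨-, hyu⟩
  · exact le_rfl
  · exact le_of_transGen_ltRel hcons hyu

end

theorem hatOf_greatest_general {Y : Type*} (B : Set (Y → ℝ))
    (β : Y → ℝ)
    (α : Y → ℝ) (hle : ∀ y : Y, α y ≤ β y)
    (hcons : ∀ δ ∈ B, ConsistentWith α δ) :
    ∀ y : Y, α y ≤ hatOf B β y := by
  intro y
  refine le_csInf ⟨β y, y, Or.inl rfl, rfl⟩ ?_
  rintro _ ⟨u, hu, rfl⟩
  exact (le_of_mem_consClass hcons hu).trans (hle u)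

/-- `β̂` is the greatest source element below `β` consistent with `B`: any source
element `α ≤ β` (pointwise) that is consistent with every element of `B` satisfies
`α ≤ β̂` pointwise. -/
theorem hatOf_greatest {Y : Type*} (B : Set (Y → ℝ))
    (hfin : B.Finite) (hsrc : ∀ β ∈ B, IsSourceElem β)
    (β : Y → ℝ) (hβ : β ∈ B)
    (α : Y → ℝ) (hα : IsSourceElem α) (hle : ∀ y : Y, α y ≤ β y)
    (hcons : ∀ δ ∈ B, ConsistentWith α δ) :
    ∀ y : Y, α y ≤ hatOf B β y :=
  hatOf_greatest_general B β α hle hcons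
end
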